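/- arXiv:math/0312153 — 4 statements merged into one kernel-verified Lean document; each statement's English description precedes it below -/
import Mathlib

section
/- In the free product G = ⟨a⟩ * ⟨b⟩ of two cyclic groups of order two, every element of G is a product of at most two palindromes (reduced words equal to their reverses), and some element of G is not itself a palindrome; hence the palindromic width of G equals 2. -/
open Monoid Monoid.CoprodI

attribute [local instance] Classical.propDecidable

/-- The list of syllables of the reduced word representing `g`. -/
noncomputable def syllables {ι : Type*} {M : ι → Type*} [∀ i, Group (M i)]
    (g : CoprodI M) : List (Σ i, M i) :=
  letI := Classical.decEq ι
  letI : ∀ i, DecidableEq (M i) := fun _ => Classical.decEq _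
  (Word.equiv g).toList

/-- `g` is a palindrome iff its reduced word reads the same backwards. -/
noncomputable def IsPalindrome {ι : Type*} {M : ι → Type*} [∀ i, Group (M i)]
    (g : CoprodI M) : Prop :=
  (syllables g).reverse = syllables g

/-! In `ℤ/2 * ℤ/2` a reduced word alternates between the unique nontrivial letters of the two
factors, so its `k`-th syllable depends only on the parity of `k`. A word of odd length `n` thus
agrees with its reverse, as `k` and `n - 1 - k` have the same parity, and a word of even length is
its first letter times a word of odd length. The word `ab` is not a palindrome. -/

theorem Sigma.eq_of_fst_eq_of_ne_one {ι : Type*} {M : ι → Type*} [∀ i, One (M i)]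
    {x y : Σ i, M i} (hM : Nat.card (M x.1) = 2) (h : x.1 = y.1)
    (hx : x.2 ≠ 1) (hy : y.2 ≠ 1) : x = y := by
  obtain ⟨i, m⟩ := x
  obtain ⟨j, n⟩ := y
  cases h
  exact congrArg (Sigma.mk i) (((Nat.card_eq_two_iff' 1).mp hM).unique hx hy)

section Palindromes

variable {ι : Type*} {M : ι → Type*} [∀ i, Group (M i)]

theorem syllables_prod (w : Word M) : syllables w.prod = w.toList :=
  congrArg Word.toList (Word.equiv.apply_symm_apply w)

theorem isPalindrome_prod_iff (w : Word M) :
    IsPalindrome w.prod ↔ w.toList.reverse = w.toList := by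
  rw [IsPalindrome, syllables_prod]

theorem isPalindrome_one : IsPalindrome (1 : CoprodI M) :=
  (isPalindrome_prod_iff Word.empty).2 rfl

theorem isPalindrome_of {i : ι} (m : M i) : IsPalindrome (of m) := by
  by_cases hm : m = 1
  · rw [hm, map_one]
    exact isPalindrome_one
  · have h := (isPalindrome_prod_iff (Word.cons m Word.empty (by simp [Word.fstIdx]) hm)).2 rfl
    rwa [Word.prod_cons, Word.prod_empty, mul_one] at h

theorem not_isPalindrome_of_mul_of {i j : ι} (hij : i ≠ j) {a : M i} {b : M j}
    (ha : a ≠ 1) (hb : b ≠ 1) : ¬ IsPalindrome (of a * of b) := by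
  have hb' : (Word.empty : Word M).fstIdx ≠ some j := by simp [Word.fstIdx]
  have hab : (Word.cons b Word.empty hb' hb).fstIdx ≠ some i := by simpa using hij.symm
  rw [← mul_one (of b), ← Word.prod_empty, ← Word.prod_cons _ _ _ hb hb',
    ← Word.prod_cons _ _ _ ha hab, isPalindrome_prod_iff]
  simp [hij.symm]

end Palindromes

namespace Monoid.CoprodI.Word

variable {M : Bool → Type*} [∀ b, Group (M b)]

theorem getElem_add_two (hM : ∀ b, Nat.card (M b) = 2) (w : Word M) {k : ℕ}
    (hk : k + 2 < w.toList.length) : w.toList[k + 2] = w.toList[k] := by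
  refine Sigma.eq_of_fst_eq_of_ne_one (hM _) ?_ (w.ne_one _ (List.getElem_mem _))
    (w.ne_one _ (List.getElem_mem _))
  have h₁ := w.chain_ne.getElem k (by omega)
  have h₂ := w.chain_ne.getElem (k + 1) hk
  revert h₁ h₂
  cases w.toList[k].1 <;> cases w.toList[k + 1].1 <;> cases w.toList[k + 2].1 <;> simp

theorem getElem_eq_getElem_mod_two (hM : ∀ b, Nat.card (M b) = 2) (w : Word M) :
    ∀ (k : ℕ) (hk : k < w.toList.length), w.toList[k] = w.toList[k % 2]
  | 0, _ | 1, _ => rfl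
  | k + 2, hk => by
    rw [getElem_add_two hM w hk, getElem_eq_getElem_mod_two hM w k (by omega)]
    simp

theorem toList_reverse_of_odd (hM : ∀ b, Nat.card (M b) = 2) (w : Word M)
    (hodd : Odd w.toList.length) : w.toList.reverse = w.toList := by
  refine List.ext_getElem List.length_reverse fun k hk _ => ?_
  rw [List.getElem_reverse, getElem_eq_getElem_mod_two hM w,
    getElem_eq_getElem_mod_two hM w k]
  obtain ⟨n, hn⟩ := hodd
  congr 1
  omega

theorem exists_isPalindrome_mul (hM : ∀ b, Nat.card (M b) = 2) (w : Word M) :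
    ∃ p q : CoprodI M, IsPalindrome p ∧ IsPalindrome q ∧ w.prod = p * q := by
  induction w using consRecOn with
  | empty => exact ⟨1, 1, isPalindrome_one, isPalindrome_one, by simp⟩
  | cons i m w hw hm _ =>
    rcases Nat.even_or_odd w.toList.length with heven | hodd
    · refine ⟨_, 1, ?_, isPalindrome_one, (mul_one _).symm⟩
      exact (isPalindrome_prod_iff _).2 (toList_reverse_of_odd hM _ (by simpa using heven.add_one))
    · refine ⟨of m, w.prod, isPalindrome_of m, ?_, prod_cons i m w hm hw⟩
      exact (isPalindrome_prod_iff w).2 (toList_reverse_of_odd hM w hodd)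

end Monoid.CoprodI.Word

/-- In the free product of two cyclic groups of order two, every element is a
product of at most two palindromes, and some element is not a palindrome:
the palindromic width is two. -/
theorem palindromic_width_two_of_Z2_star_Z2 {M : Bool → Type*} [∀ b, Group (M b)]
    (hA : Nat.card (M true) = 2) (hB : Nat.card (M false) = 2) :
    (∀ g : CoprodI M, ∃ p q : CoprodI M, IsPalindrome p ∧ IsPalindrome q ∧ g = p * q) ∧
    (∃ g : CoprodI M, ¬ IsPalindrome g) := by
  have hM : ∀ b, Nat.card (M b) = 2 := Bool.forall_bool.2 ⟨hB, hA⟩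
  refine ⟨fun g => ?_, ?_⟩
  · obtain ⟨p, q, hp, hq, hpq⟩ := Word.exists_isPalindrome_mul hM (Word.equiv g)
    exact ⟨p, q, hp, hq, (Word.equiv.symm_apply_apply g).symm.trans hpq⟩
  · obtain ⟨a, ha, -⟩ := (Nat.card_eq_two_iff' (1 : M true)).mp hA
    obtain ⟨b, hb, -⟩ := (Nat.card_eq_two_iff' (1 : M false)).mp hB
    exact ⟨of a * of b, not_isPalindrome_of_mul_of (by decide) ha hb⟩
end

section
/- Let G = A * B be a free product of nontrivial groups with a fixed element a ∈ A of order at least 3. For each k ∈ ℕ let d_k(g) be the number of a-segments of length 2k+1 in the reduced word g, and d*_k(g) the number of a⁻¹-segments of length 2k+1. Then for every reduced word g ∈ G, d_k(g) = d*_k(g⁻¹), and consequently t_k(g) + t_k(g⁻¹) = 0 where t_k = d_k − d*_k. -/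
open Monoid Monoid.CoprodI

attribute [local instance] Classical.propDecidable

/-- `segCount s k g` is the number of `s`-segments of syllable length `2k+1`
in the reduced form of `g`: pairs of consecutive occurrences of the syllable `s`
at distance `2k+2` in the syllable list. -/
noncomputable def segCount {ι : Type*} {M : ι → Type*} [∀ i, Group (M i)]
    (s : Σ i, M i) (k : ℕ) (g : CoprodI M) : ℕ :=
  ((Finset.range (syllables g).length ×ˢ Finset.range (syllables g).length).filter
    (fun pq => pq.1 < pq.2 ∧ (syllables g)[pq.1]? = some s ∧ (syllables g)[pq.2]? = some s ∧
      (∀ r ∈ Finset.Ioo pq.1 pq.2, (syllables g)[r]? ≠ some s) ∧ pq.2 - pq.1 = 2*k+2)).card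
/-!
The reduced word of `g⁻¹` is the reduced word of `g` read backwards with every syllable inverted.
Reading backwards preserves the distance between consecutive occurrences of a syllable, and
inverting syllables turns occurrences of `a` into occurrences of `a⁻¹`, so the `a`-segments of `g`
correspond to the `a⁻¹`-segments of `g⁻¹`. Applying this to `g` and to `g⁻¹` gives
`t_k(g⁻¹) = d*_k(g) - d_k(g) = -t_k(g)`.
-/

namespace Monoid.CoprodI.Word

variable {ι : Type*} {M : ι → Type*} [∀ i, Group (M i)]

def inv (w : Word M) : Word M where
  toList := (w.toList.map (fun l => ⟨l.1, l.2⁻¹⟩)).reverse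
  ne_one := by
    simp only [List.mem_reverse, List.mem_map, forall_exists_index, and_imp]
    rintro _ l hl rfl
    simpa using w.ne_one l hl
  chain_ne := by
    rw [List.isChain_reverse, List.isChain_map]
    exact w.chain_ne.imp fun _ _ h => h.symm

theorem prod_inv (w : Word M) : w.inv.prod = w.prod⁻¹ := by
  simp [prod, inv, List.prod_inv_reverse, List.map_reverse, Function.comp_def]

end Monoid.CoprodI.Word

section Segments

variable {α β : Type*}

noncomputable def segmentPairs (L : List α) (s : α) (k : ℕ) : Finset (ℕ × ℕ) :=
  (Finset.range L.length ×ˢ Finset.range L.length).filter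
    (fun pq => pq.1 < pq.2 ∧ L[pq.1]? = some s ∧ L[pq.2]? = some s ∧
      (∀ r ∈ Finset.Ioo pq.1 pq.2, L[r]? ≠ some s) ∧ pq.2 - pq.1 = 2 * k + 2)

theorem segmentPairs_map {f : α → β} (hf : Function.Injective f) (L : List α) (s : α) (k : ℕ) :
    segmentPairs (L.map f) (f s) k = segmentPairs L s k := by
  have hget (r : ℕ) : (L.map f)[r]? = some (f s) ↔ L[r]? = some s := by
    rw [List.getElem?_map, ← Option.map_some, (Option.map_injective hf).eq_iff]
  simp only [segmentPairs, List.length_map, ne_eq, hget]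

theorem card_segmentPairs_le_reverse (L : List α) (s : α) (k : ℕ) :
    (segmentPairs L s k).card ≤ (segmentPairs L.reverse s k).card := by
  set n := L.length
  have hrev {i : ℕ} (hi : i < n) : L.reverse[n - 1 - i]? = L[i]? := by
    rw [List.getElem?_reverse (by simp [n]; omega)]
    congr 1
    omega
  refine Finset.card_le_card_of_injOn (fun pq => (n - 1 - pq.2, n - 1 - pq.1)) ?_ ?_
  · rintro ⟨p, q⟩ hpq
    simp only [segmentPairs, Finset.coe_filter, Finset.mem_product, Finset.mem_range,
      Set.mem_ofPred_eq, List.length_reverse] at hpq ⊢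
    obtain ⟨⟨hp, hq⟩, hlt, hs₁, hs₂, hgap, hd⟩ := hpq
    refine ⟨⟨by omega, by omega⟩, by omega, by rwa [hrev hq], by rwa [hrev hp], ?_, by omega⟩
    intro r hr
    rw [Finset.mem_Ioo] at hr
    have : r = n - 1 - (n - 1 - r) := by omega
    rw [this, hrev (by omega)]
    exact hgap _ (Finset.mem_Ioo.mpr (by omega))
  · rintro ⟨p, q⟩ hpq ⟨p', q'⟩ hpq' h
    simp only [segmentPairs, Finset.coe_filter, Finset.mem_product, Finset.mem_range,
      Set.mem_ofPred_eq, Prod.mk.injEq] at hpq hpq' h ⊢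
    omega

theorem card_segmentPairs_reverse (L : List α) (s : α) (k : ℕ) :
    (segmentPairs L.reverse s k).card = (segmentPairs L s k).card :=
  le_antisymm (by simpa using card_segmentPairs_le_reverse L.reverse s k)
    (card_segmentPairs_le_reverse L s k)

end Segments

section Syllables

variable {ι : Type*} {M : ι → Type*} [∀ i, Group (M i)]

theorem segCount_eq_card_segmentPairs (s : Σ i, M i) (k : ℕ) (g : CoprodI M) :
    segCount s k g = (segmentPairs (syllables g) s k).card := by
  unfold segCount segmentPairs
  -- the two filters differ only in the decidability instances they were elaborated with
  congr

theorem syllables_inv (g : CoprodI M) :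
    syllables g⁻¹ = ((syllables g).map fun l => ⟨l.1, l.2⁻¹⟩).reverse := by
  -- the instances used in the definition of `syllables`, so that the `change`s below are defeq
  let := Classical.decEq ι
  let : ∀ i, DecidableEq (M i) := fun _ => Classical.decEq _
  have h : Word.equiv.symm (Word.equiv g).inv = g⁻¹ := by
    change (Word.equiv g).inv.prod = g⁻¹
    rw [Word.prod_inv]
    exact congrArg Inv.inv (Word.equiv.symm_apply_apply g)
  change (Word.equiv g⁻¹).toList = (Word.equiv g).inv.toList
  rw [← Word.equiv.symm_apply_eq.1 h]

theorem segCount_inv (s : Σ i, M i) (k : ℕ) (g : CoprodI M) :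
    segCount ⟨s.1, s.2⁻¹⟩ k g⁻¹ = segCount s k g := by
  have hinj : Function.Injective fun l : Σ i, M i => (⟨l.1, l.2⁻¹⟩ : Σ i, M i) :=
    Function.injective_id.sigma_map fun _ => inv_injective
  rw [segCount_eq_card_segmentPairs, segCount_eq_card_segmentPairs, syllables_inv,
    card_segmentPairs_reverse, segmentPairs_map hinj]

end Syllables

theorem d_inv_and_t_inv_general {M : Bool → Type*} [∀ b, Group (M b)]
    (a : M true) (g : CoprodI M) (k : ℕ) :
    segCount ⟨true, a⟩ k g = segCount ⟨true, a⁻¹⟩ k g⁻¹ ∧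
    ((segCount ⟨true, a⟩ k g : ℤ) - segCount ⟨true, a⁻¹⟩ k g) +
      ((segCount ⟨true, a⟩ k g⁻¹ : ℤ) - segCount ⟨true, a⁻¹⟩ k g⁻¹) = 0 := by
  have hg : segCount ⟨true, a⁻¹⟩ k g⁻¹ = segCount ⟨true, a⟩ k g := segCount_inv ⟨true, a⟩ k g
  have hg' : segCount ⟨true, a⁻¹⟩ k g = segCount ⟨true, a⟩ k g⁻¹ := by
    simpa using segCount_inv ⟨true, a⟩ k g⁻¹
  refine ⟨hg.symm, ?_⟩
  rw [hg, hg']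
  ring

/-- `d_k(g) = d*_k(g⁻¹)` and `t_k(g) + t_k(g⁻¹) = 0` where `d_k` counts
`a`-segments of length `2k+1`, `d*_k` counts `a⁻¹`-segments of length `2k+1`
and `t_k = d_k - d*_k`. -/
theorem d_inv_and_t_inv {M : Bool → Type*} [∀ b, Group (M b)]
    [Nontrivial (M true)] [Nontrivial (M false)]
    (a : M true) (ha1 : a ≠ 1) (ha2 : a ≠ a⁻¹) (g : CoprodI M) (k : ℕ) :
    segCount ⟨true, a⟩ k g = segCount ⟨true, a⁻¹⟩ k g⁻¹ ∧
    ((segCount ⟨true, a⟩ k g : ℤ) - segCount ⟨true, a⁻¹⟩ k g) +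
      ((segCount ⟨true, a⟩ k g⁻¹ : ℤ) - segCount ⟨true, a⁻¹⟩ k g⁻¹) = 0 :=
  d_inv_and_t_inv_general a g k
end

section
/- Define Δ₁(g) = Σ_{k≥0} r_k(g), where r_k(g) ∈ {0,1} is the residue mod 2 of t_k(g) (a finite sum). Then Δ₁ is a quasi-homomorphism: Δ₁(gh) ≤ Δ₁(g) + Δ₁(h) + 9 for all g, h ∈ G. -/
/-! Write the reduced words as `g = u X m`, `h = m⁻¹ Y v` and `gh = u Z v`, where `m` is the part
cancelled in the product and `X`, `Y`, `Z` have at most one syllable. Gluing two words creates at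
most one new `s`-segment, so `t_k` is additive along each of the three factorisations for all but
at most three values of `k`, while `t_k(m⁻¹) = -t_k(m)`. Hence `t_k(gh) = t_k(g) + t_k(h)` off nine
values of `k`, and off those the parity of `t_k(gh)` is odd only if that of `t_k(g)` or of
`t_k(h)` is. -/

open Monoid Monoid.CoprodI

attribute [local instance] Classical.propDecidable

/-- The quasi-homomorphism `Δ₁`: the (finite) sum over `k` of the residue mod 2
of `t_k(g) = d_k(g) - d*_k(g)`. -/
noncomputable def Delta1 {M : Bool → Type*} [∀ b, Group (M b)]
    (a : M true) (g : CoprodI M) : ℕ :=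
  ∑ᶠ k : ℕ, if Odd ((segCount ⟨true, a⟩ k g : ℤ) - segCount ⟨true, a⁻¹⟩ k g)
    then 1 else 0

section Segments

variable {α : Type*} {s : α} {k : ℕ} {L A B : List α} {p q : ℕ}

def IsSegment (s : α) (L : List α) (p q : ℕ) : Prop :=
  p < q ∧ L[p]? = some s ∧ L[q]? = some s ∧ ∀ r, p < r → r < q → L[r]? ≠ some s

noncomputable def segments (s : α) (k : ℕ) (L : List α) : Finset (ℕ × ℕ) :=
  (Finset.range L.length ×ˢ Finset.range L.length).filter
    (fun pq => pq.1 < pq.2 ∧ L[pq.1]? = some s ∧ L[pq.2]? = some s ∧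
      (∀ r ∈ Finset.Ioo pq.1 pq.2, L[r]? ≠ some s) ∧ pq.2 - pq.1 = 2*k+2)

lemma IsSegment.lt_length (h : IsSegment s L p q) : q < L.length :=
  (List.getElem?_eq_some_iff.1 h.2.2.1).1

lemma mem_segments {pq : ℕ × ℕ} :
    pq ∈ segments s k L ↔ IsSegment s L pq.1 pq.2 ∧ pq.2 - pq.1 = 2 * k + 2 := by
  simp only [segments, IsSegment, Finset.mem_filter, Finset.mem_product, Finset.mem_range,
    Finset.mem_Ioo, and_imp]
  constructor
  · rintro ⟨-, hpq, hp, hq, hr, hgap⟩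
    exact ⟨⟨hpq, hp, hq, hr⟩, hgap⟩
  · rintro ⟨⟨hpq, hp, hq, hr⟩, hgap⟩
    have hqL := (List.getElem?_eq_some_iff.1 hq).1
    exact ⟨⟨by omega, hqL⟩, hpq, hp, hq, hr, hgap⟩

lemma segments_eq_empty (h : L.length ≤ 2 * k + 2) : segments s k L = ∅ := by
  refine Finset.eq_empty_of_forall_notMem fun pq hpq => ?_
  obtain ⟨hseg, hgap⟩ := mem_segments.1 hpq
  have := hseg.lt_length
  omega

@[simp]
lemma segments_singleton (x : α) : segments s k [x] = ∅ :=
  segments_eq_empty (by simp)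

lemma IsSegment.eq_of_le_of_lt {p' q' c : ℕ} (h : IsSegment s L p q) (h' : IsSegment s L p' q')
    (hpc : p ≤ c) (hcq : c < q) (hpc' : p' ≤ c) (hcq' : c < q') : p = p' ∧ q = q' := by
  obtain ⟨hpq, hp, hq, hr⟩ := h
  obtain ⟨hpq', hp', hq', hr'⟩ := h'
  have hpp : p = p' := by
    by_contra hne
    rcases Nat.lt_or_gt_of_ne hne with hlt | hlt
    · exact hr p' hlt (by omega) hp'
    · exact hr' p hlt (by omega) hp
  subst hpp
  refine ⟨rfl, ?_⟩
  by_contra hne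
  rcases Nat.lt_or_gt_of_ne hne with hlt | hlt
  · exact hr' q hpq hlt hq
  · exact hr q' hpq' hlt hq'

lemma isSegment_shift_iff {L' : List α} {d : ℕ} (h : ∀ i ≤ q, L[i + d]? = L'[i]?) :
    IsSegment s L (p + d) (q + d) ↔ IsSegment s L' p q := by
  unfold IsSegment
  constructor
  · rintro ⟨hpq, hp, hq, hr⟩
    refine ⟨by omega, by rwa [← h p (by omega)], by rwa [← h q le_rfl], fun r h1 h2 => ?_⟩
    rw [← h r h2.le]
    exact hr (r + d) (by omega) (by omega)
  · rintro ⟨hpq, hp, hq, hr⟩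
    refine ⟨by omega, by rwa [h p hpq.le], by rwa [h q le_rfl], fun r h1 h2 => ?_⟩
    obtain ⟨r, rfl⟩ : ∃ r', r = r' + d := ⟨r - d, by omega⟩
    rw [h r (by omega)]
    exact hr r (by omega) (by omega)

lemma isSegment_append_left_iff (hq : q < A.length) :
    IsSegment s (A ++ B) p q ↔ IsSegment s A p q :=
  isSegment_shift_iff (d := 0) fun _ hi => List.getElem?_append_left (by omega)

lemma isSegment_append_right_iff :
    IsSegment s (A ++ B) (p + A.length) (q + A.length) ↔ IsSegment s B p q :=
  isSegment_shift_iff fun i _ => by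
    rw [List.getElem?_append_right (by omega), Nat.add_sub_cancel]

end Segments

section Append

variable {α : Type*} {s : α} {k : ℕ} {A B : List α}

noncomputable def crossSegments (s : α) (A B : List α) : Finset (ℕ × ℕ) :=
  (Finset.range (A ++ B).length ×ˢ Finset.range (A ++ B).length).filter
    fun pq => IsSegment s (A ++ B) pq.1 pq.2 ∧ pq.1 < A.length ∧ A.length ≤ pq.2

lemma mem_crossSegments {pq : ℕ × ℕ} :
    pq ∈ crossSegments s A B ↔
      IsSegment s (A ++ B) pq.1 pq.2 ∧ pq.1 < A.length ∧ A.length ≤ pq.2 := by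
  simp only [crossSegments, Finset.mem_filter, Finset.mem_product, Finset.mem_range,
    and_iff_right_iff_imp]
  rintro ⟨hseg, -, -⟩
  exact ⟨by have := hseg.1; have := hseg.lt_length; omega, hseg.lt_length⟩

lemma card_crossSegments_le_one : (crossSegments s A B).card ≤ 1 :=
  Finset.card_le_one.2 fun ⟨p, q⟩ h ⟨p', q'⟩ h' => by
    rw [mem_crossSegments] at h h'
    obtain ⟨rfl, rfl⟩ :=
      h.1.eq_of_le_of_lt h'.1 (c := A.length - 1) (by omega) (by omega) (by omega) (by omega)
    rfl

lemma segments_append_filter_lt :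
    (segments s k (A ++ B)).filter (fun pq => pq.2 < A.length) = segments s k A := by
  ext ⟨p, q⟩
  simp only [Finset.mem_filter, mem_segments]
  constructor
  · rintro ⟨⟨hseg, hgap⟩, hq⟩
    exact ⟨(isSegment_append_left_iff hq).1 hseg, hgap⟩
  · rintro ⟨hseg, hgap⟩
    exact ⟨⟨(isSegment_append_left_iff hseg.lt_length).2 hseg, hgap⟩, hseg.lt_length⟩

lemma card_segments_append_filter_le :
    ((segments s k (A ++ B)).filter fun pq => A.length ≤ pq.1).card =
      (segments s k B).card := by
  refine Finset.card_nbij' (fun pq => (pq.1 - A.length, pq.2 - A.length))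
    (fun pq => (pq.1 + A.length, pq.2 + A.length)) ?_ ?_ ?_ ?_
  · rintro ⟨p, q⟩ h
    simp only [Finset.coe_filter, Set.mem_ofPred_eq, mem_segments] at h
    obtain ⟨⟨hseg, hgap⟩, hp⟩ := h
    obtain ⟨p, rfl⟩ : ∃ p', p = p' + A.length := ⟨p - A.length, by omega⟩
    obtain ⟨q, rfl⟩ : ∃ q', q = q' + A.length := ⟨q - A.length, by have := hseg.1; omega⟩
    simp only [Finset.mem_coe, mem_segments, Nat.add_sub_cancel]
    exact ⟨isSegment_append_right_iff.1 hseg, by omega⟩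
  · rintro ⟨p, q⟩ h
    simp only [Finset.mem_coe, mem_segments] at h
    simp only [Finset.coe_filter, Set.mem_ofPred_eq, mem_segments]
    exact ⟨⟨isSegment_append_right_iff.2 h.1, by omega⟩, by omega⟩
  · rintro ⟨p, q⟩ h
    simp only [Finset.coe_filter, Set.mem_ofPred_eq, mem_segments] at h
    have := h.1.1.1
    simp only [Prod.mk.injEq]
    omega
  · rintro ⟨p, q⟩ -
    simp

lemma card_segments_append :
    (segments s k (A ++ B)).card = (segments s k A).card + (segments s k B).card +
      ((crossSegments s A B).filter fun pq => pq.2 - pq.1 = 2 * k + 2).card := by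
  set F := segments s k (A ++ B)
  have hright : (F.filter fun pq => ¬ pq.2 < A.length ∧ A.length ≤ pq.1) =
      F.filter fun pq => A.length ≤ pq.1 :=
    Finset.filter_congr fun pq hpq => by
      have := ((mem_segments.1 hpq).1).1
      omega
  have hcross : (F.filter fun pq => ¬ pq.2 < A.length ∧ ¬ A.length ≤ pq.1) =
      (crossSegments s A B).filter fun pq => pq.2 - pq.1 = 2 * k + 2 := by
    ext ⟨p, q⟩
    simp only [F, Finset.mem_filter, mem_segments, mem_crossSegments, not_lt, not_le]
    tauto
  have hsplit := Finset.card_filter_add_card_filter_not (s := F) fun pq => pq.2 < A.length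
  have hsplit' := Finset.card_filter_add_card_filter_not
    (s := F.filter fun pq => ¬ pq.2 < A.length) fun pq => A.length ≤ pq.1
  rw [Finset.filter_filter, Finset.filter_filter, hright, card_segments_append_filter_le,
    hcross] at hsplit'
  rw [segments_append_filter_lt] at hsplit
  omega

lemma exists_card_segments_append :
    ∃ k₀, ∀ k ≠ k₀, (segments s k (A ++ B)).card =
      (segments s k A).card + (segments s k B).card := by
  obtain hempty | ⟨⟨p, q⟩, hpq⟩ := (crossSegments s A B).eq_empty_or_nonempty
  · exact ⟨0, fun k _ => by simp [card_segments_append, hempty]⟩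
  · refine ⟨(q - p - 2) / 2, fun k hk => ?_⟩
    suffices ((crossSegments s A B).filter fun pq => pq.2 - pq.1 = 2 * k + 2) = ∅ by
      rw [card_segments_append, this, Finset.card_empty, add_zero]
    refine Finset.filter_eq_empty_iff.2 fun pq' hpq' hgap => hk ?_
    rw [Finset.card_le_one.1 card_crossSegments_le_one _ hpq' _ hpq] at hgap
    omega

lemma card_segments_cons_of_ne {x : α} (hx : x ≠ s) :
    (segments s k (x :: B)).card = (segments s k B).card := by
  have hcross : crossSegments s [x] B = ∅ := by
    refine Finset.eq_empty_of_forall_notMem fun ⟨p, q⟩ h => ?_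
    obtain ⟨hseg, hp, -⟩ := mem_crossSegments.1 h
    obtain rfl : p = 0 := by simpa using hp
    exact hx (by simpa using hseg.2.1)
  have := card_segments_append (s := s) (k := k) (A := [x]) (B := B)
  simpa [hcross] using this

lemma exists_card_segments_append_append [DecidableEq α] {X : List α} (hX : X.length ≤ 1) :
    ∃ bad : Finset ℕ, bad.card ≤ 1 + X.count s ∧ ∀ k ∉ bad,
      (segments s k (A ++ X ++ B)).card = (segments s k A).card + (segments s k B).card := by
  match X, hX with
  | [], _ =>
    obtain ⟨k₀, hk₀⟩ := exists_card_segments_append (s := s) (A := A) (B := B)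
    exact ⟨{k₀}, by simp, fun k hk => by simpa using hk₀ k (by simpa using hk)⟩
  | [x], _ =>
    obtain ⟨k₁, hk₁⟩ := exists_card_segments_append (s := s) (A := A) (B := x :: B)
    rw [List.append_assoc, List.singleton_append]
    by_cases hxs : x = s
    · subst hxs
      obtain ⟨k₂, hk₂⟩ := exists_card_segments_append (s := x) (A := [x]) (B := B)
      refine ⟨{k₁, k₂}, (Finset.card_le_two).trans (by simp), fun k hk => ?_⟩
      simp only [Finset.mem_insert, Finset.mem_singleton, not_or] at hk
      rw [hk₁ k hk.1, ← List.singleton_append, hk₂ k hk.2, segments_singleton,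
        Finset.card_empty, zero_add]
    · exact ⟨{k₁}, by simp, fun k hk => by
        rw [hk₁ k (by simpa using hk), card_segments_cons_of_ne hxs]⟩

end Append

section Symmetry

variable {α : Type*} {s : α} {k : ℕ} {L : List α} {p q : ℕ}

lemma IsSegment.reverse (h : IsSegment s L p q) :
    IsSegment s L.reverse (L.length - 1 - q) (L.length - 1 - p) := by
  obtain ⟨hpq, hp, hq, hr⟩ := h
  have hqL := (List.getElem?_eq_some_iff.1 hq).1
  refine ⟨by omega, ?_, ?_, fun r h1 h2 => ?_⟩
  · rwa [List.getElem?_reverse (by omega), show L.length - 1 - (L.length - 1 - q) = q by omega]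
  · rwa [List.getElem?_reverse (by omega), show L.length - 1 - (L.length - 1 - p) = p by omega]
  · rw [List.getElem?_reverse (by omega)]
    exact hr _ (by omega) (by omega)

lemma card_segments_reverse : (segments s k L.reverse).card = (segments s k L).card := by
  have hmaps : ∀ L : List α, Set.MapsTo (fun pq => (L.length - 1 - pq.2, L.length - 1 - pq.1))
      (segments s k L : Set (ℕ × ℕ)) (segments s k L.reverse) := fun L ⟨p, q⟩ h => by
    obtain ⟨hseg, hgap⟩ := mem_segments.1 h
    exact mem_segments.2 ⟨hseg.reverse, by have := hseg.lt_length; dsimp only; omega⟩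
  have hinv : ∀ L : List α, Set.LeftInvOn (fun pq => (L.length - 1 - pq.2, L.length - 1 - pq.1))
      (fun pq => (L.length - 1 - pq.2, L.length - 1 - pq.1)) (segments s k L) :=
    fun L ⟨p, q⟩ h => by
      have := (mem_segments.1 h).1.lt_length
      have := (mem_segments.1 h).1.1
      simp only [Prod.mk.injEq]
      omega
  refine Finset.card_nbij' _ _ ?_ (hmaps L) ?_ (hinv L)
  · simpa using hmaps L.reverse
  · simpa using hinv L.reverse

lemma segments_map {β : Type*} {f : α → β} (hf : Function.Injective f) :
    segments (f s) k (L.map f) = segments s k L := by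
  ext pq
  simp [segments, List.getElem?_map, hf.eq_iff]

end Symmetry

section Balance

variable {α : Type*}

/-- The paper's `t_k` is `segBalance s s⁻¹ (syllables g) k`. -/
noncomputable def segBalance (s s' : α) (L : List α) (k : ℕ) : ℤ :=
  (segments s k L).card - (segments s' k L).card

lemma segBalance_eq_zero {s s' : α} {L : List α} {k : ℕ} (h : L.length ≤ 2 * k + 2) :
    segBalance s s' L k = 0 := by
  simp [segBalance, segments_eq_empty h]

lemma exists_segBalance_append_append (s s' : α) (A B : List α) {X : List α}
    (hX : X.length ≤ 1) : ∃ bad : Finset ℕ, bad.card ≤ 3 ∧ ∀ k ∉ bad,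
      segBalance s s' (A ++ X ++ B) k = segBalance s s' A k + segBalance s s' B k := by
  classical
  by_cases hss : s = s'
  · subst hss
    exact ⟨∅, by simp, fun k _ => by simp [segBalance]⟩
  obtain ⟨bad, hbad, hk⟩ := exists_card_segments_append_append (s := s) (A := A) (B := B) hX
  obtain ⟨bad', hbad', hk'⟩ := exists_card_segments_append_append (s := s') (A := A) (B := B) hX
  have hcount : X.count s + X.count s' ≤ 1 := by
    match X, hX with
    | [], _ => simp
    | [x], _ => by_cases x = s <;> by_cases x = s' <;> simp_all [List.count_singleton]
  refine ⟨bad ∪ bad', (Finset.card_union_le _ _).trans (by omega), fun k hk'' => ?_⟩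
  rw [Finset.mem_union, not_or] at hk''
  simp only [segBalance, hk k hk''.1, hk' k hk''.2]
  push_cast
  ring

end Balance

section Words

variable {ι : Type*} {M : ι → Type*}

section Monoid

variable [∀ i, Monoid (M i)]

def IsReducedWord (L : List (Σ i, M i)) : Prop :=
  (∀ l ∈ L, l.2 ≠ 1) ∧ L.IsChain fun l l' => l.1 ≠ l'.1

noncomputable def ofSyllables (L : List (Σ i, M i)) : CoprodI M :=
  (L.map fun l => of l.2).prod

@[simp]
lemma ofSyllables_nil : ofSyllables ([] : List (Σ i, M i)) = 1 := rfl

@[simp]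
lemma ofSyllables_append (A B : List (Σ i, M i)) :
    ofSyllables (A ++ B) = ofSyllables A * ofSyllables B := by
  simp [ofSyllables]

@[simp]
lemma ofSyllables_cons (x : Σ i, M i) (B : List (Σ i, M i)) :
    ofSyllables (x :: B) = of x.2 * ofSyllables B := by
  simp [ofSyllables]

lemma isReducedWord_append {A B : List (Σ i, M i)} :
    IsReducedWord (A ++ B) ↔
      IsReducedWord A ∧ IsReducedWord B ∧ ∀ x ∈ A.getLast?, ∀ y ∈ B.head?, x.1 ≠ y.1 := by
  simp only [IsReducedWord, List.isChain_append, List.forall_mem_append]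
  tauto

lemma isReducedWord_singleton {x : Σ i, M i} : IsReducedWord [x] ↔ x.2 ≠ 1 := by
  simp [IsReducedWord]

end Monoid

variable [∀ i, Group (M i)]

lemma syllables_ofSyllables {L : List (Σ i, M i)} (h : IsReducedWord L) :
    syllables (ofSyllables L) = L :=
  congrArg Word.toList (Word.equiv.apply_symm_apply (⟨L, h.1, h.2⟩ : Word M))

lemma ofSyllables_syllables (g : CoprodI M) : ofSyllables (syllables g) = g :=
  Word.equiv.symm_apply_apply g

lemma isReducedWord_syllables (g : CoprodI M) : IsReducedWord (syllables g) :=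
  ⟨(Word.equiv g).ne_one, (Word.equiv g).chain_ne⟩

def invSyllable (x : Σ i, M i) : Σ i, M i := ⟨x.1, x.2⁻¹⟩

lemma invSyllable_invSyllable (x : Σ i, M i) : invSyllable (invSyllable x) = x := by
  rcases x with ⟨i, x⟩
  exact Sigma.ext rfl (heq_of_eq (inv_inv x))

/-- The reduced word of `g⁻¹` when `L` is that of `g`. -/
def invRev (L : List (Σ i, M i)) : List (Σ i, M i) :=
  (L.map invSyllable).reverse

theorem IsReducedWord.exists_mul_decomposition {A B : List (Σ i, M i)} (hA : IsReducedWord A)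
    (hB : IsReducedWord B) : ∃ u v m X Y Z : List (Σ i, M i),
      X.length ≤ 1 ∧ Y.length ≤ 1 ∧ Z.length ≤ 1 ∧ A = u ++ X ++ m ∧ B = invRev m ++ Y ++ v ∧
      IsReducedWord (u ++ Z ++ v) ∧ ofSyllables (u ++ Z ++ v) = ofSyllables A * ofSyllables B := by
  induction A using List.reverseRecOn generalizing B with
  | nil => exact ⟨[], B, [], [], [], [], by simp, by simp, by simp, rfl, rfl, by simpa, by simp⟩
  | append_singleton A x ih =>
    rcases B with _ | ⟨y, B⟩
    · exact ⟨A ++ [x], [], [], [], [], [], by simp, by simp, by simp, by simp, rfl, by simpa,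
        by simp⟩
    obtain ⟨hA', -, hAx⟩ := isReducedWord_append.1 hA
    obtain ⟨-, hB', hyB⟩ := isReducedWord_append.1 (show IsReducedWord ([y] ++ B) from hB)
    obtain hxy | hxy := ne_or_eq x.1 y.1
    · exact ⟨A ++ [x], y :: B, [], [], [], [], by simp, by simp, by simp, by simp, rfl,
        by simpa using isReducedWord_append.2 ⟨hA, hB, by simpa using hxy⟩, by simp [mul_assoc]⟩
    obtain ⟨i, x⟩ := x
    obtain ⟨j, y⟩ := y
    dsimp only at hxy
    subst hxy
    by_cases hxy : x * y = 1
    · obtain rfl : y = x⁻¹ := eq_inv_of_mul_eq_one_right hxy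
      obtain ⟨u, v, m, X, Y, Z, hX, hY, hZ, rfl, rfl, hred, hprod⟩ := ih hA' hB'
      refine ⟨u, v, m ++ [⟨i, x⟩], X, Y, Z, hX, hY, hZ, by simp, by simp [invRev, invSyllable],
        hred, ?_⟩
      rw [hprod]
      simp only [ofSyllables_append, ofSyllables_cons, ofSyllables_nil, map_inv, mul_one,
        mul_assoc, mul_inv_cancel_left]
    · refine ⟨A, B, [], [⟨i, x⟩], [⟨i, y⟩], [⟨i, x * y⟩], by simp, by simp, by simp, by simp,
        by simp [invRev], ?_, by simp [mul_assoc]⟩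
      refine isReducedWord_append.2
        ⟨isReducedWord_append.2 ⟨hA', isReducedWord_singleton.2 hxy, by simpa using hAx⟩, hB',
          by simpa using hyB⟩

end Words

section Rhemtulla

variable {ι : Type*} {M : ι → Type*} [∀ i, Group (M i)]

lemma segCount_eq_card_segments (s : Σ i, M i) (k : ℕ) (g : CoprodI M) :
    segCount s k g = (segments s k (syllables g)).card := by
  unfold segCount segments
  congr!

lemma exists_syllables_mul (g h : CoprodI M) : ∃ u v m X Y Z : List (Σ i, M i),
    X.length ≤ 1 ∧ Y.length ≤ 1 ∧ Z.length ≤ 1 ∧ syllables g = u ++ X ++ m ∧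
    syllables h = invRev m ++ Y ++ v ∧ syllables (g * h) = u ++ Z ++ v := by
  obtain ⟨u, v, m, X, Y, Z, hX, hY, hZ, hg, hh, hred, hprod⟩ :=
    (isReducedWord_syllables g).exists_mul_decomposition (isReducedWord_syllables h)
  refine ⟨u, v, m, X, Y, Z, hX, hY, hZ, hg, hh, ?_⟩
  rw [ofSyllables_syllables, ofSyllables_syllables] at hprod
  rw [← hprod, syllables_ofSyllables hred]

lemma card_segments_invRev (s : Σ i, M i) (k : ℕ) (L : List (Σ i, M i)) :
    (segments s k (invRev L)).card = (segments (invSyllable s) k L).card := by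
  have hinj : Function.Injective (invSyllable : (Σ i, M i) → Σ i, M i) :=
    Function.LeftInverse.injective invSyllable_invSyllable
  rw [invRev, card_segments_reverse, ← segments_map hinj (s := invSyllable s) (L := L),
    invSyllable_invSyllable]

lemma segBalance_invRev (s : Σ i, M i) (L : List (Σ i, M i)) (k : ℕ) :
    segBalance s (invSyllable s) (invRev L) k = -segBalance s (invSyllable s) L k := by
  simp only [segBalance, card_segments_invRev, invSyllable_invSyllable]
  ring

/-- Rhemtulla's lemma. -/
theorem exists_segBalance_syllables_mul (s : Σ i, M i) (g h : CoprodI M) :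
    ∃ bad : Finset ℕ, bad.card ≤ 9 ∧ ∀ k ∉ bad,
      segBalance s (invSyllable s) (syllables (g * h)) k =
        segBalance s (invSyllable s) (syllables g) k +
          segBalance s (invSyllable s) (syllables h) k := by
  obtain ⟨u, v, m, X, Y, Z, hX, hY, hZ, hg, hh, hgh⟩ := exists_syllables_mul g h
  obtain ⟨bad₁, hbad₁, hg'⟩ := exists_segBalance_append_append s (invSyllable s) u m hX
  obtain ⟨bad₂, hbad₂, hh'⟩ := exists_segBalance_append_append s (invSyllable s) (invRev m) v hY
  obtain ⟨bad₃, hbad₃, hgh'⟩ := exists_segBalance_append_append s (invSyllable s) u v hZ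
  refine ⟨bad₁ ∪ bad₂ ∪ bad₃, ?_, fun k hk => ?_⟩
  · grw [Finset.card_union_le, Finset.card_union_le]
    omega
  simp only [Finset.mem_union, not_or] at hk
  rw [hg, hh, hgh, hg' k hk.1.1, hh' k hk.1.2, hgh' k hk.2, segBalance_invRev]
  ring

end Rhemtulla

lemma sum_ite_odd_le {ι : Type*} {S bad : Finset ι} {f g h : ι → ℤ}
    (hadd : ∀ k ∉ bad, f k = g k + h k) :
    ∑ k ∈ S, (if Odd (f k) then 1 else 0) ≤
      ∑ k ∈ S, (if Odd (g k) then 1 else 0) + ∑ k ∈ S, (if Odd (h k) then 1 else 0) +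
        bad.card := by
  have hsub : S.filter (fun k => Odd (f k)) ⊆
      S.filter (fun k => Odd (g k)) ∪ S.filter (fun k => Odd (h k)) ∪ bad := by
    intro k hk
    simp only [Finset.mem_filter] at hk
    by_cases hkbad : k ∈ bad
    · simp [hkbad]
    rw [hadd k hkbad, Int.odd_add'] at hk
    by_cases hg : Odd (g k) <;> simp_all [← Int.not_even_iff_odd]
  simp only [Finset.sum_boole, Nat.cast_id]
  grw [Finset.card_le_card hsub, Finset.card_union_le, Finset.card_union_le]

lemma Delta1_eq_sum_range {M : Bool → Type*} [∀ b, Group (M b)] (a : M true) {g : CoprodI M}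
    {N : ℕ} (hN : (syllables g).length ≤ N) : Delta1 a g = ∑ k ∈ Finset.range N,
      if Odd (segBalance ⟨true, a⟩ (invSyllable ⟨true, a⟩) (syllables g) k) then 1 else 0 := by
  have hfinsum : Delta1 a g = ∑ᶠ k,
      if Odd (segBalance ⟨true, a⟩ (invSyllable ⟨true, a⟩) (syllables g) k) then 1 else 0 := by
    simp only [Delta1, segCount_eq_card_segments]
    rfl
  rw [hfinsum]
  refine finsum_eq_sum_of_support_subset _ fun k hk => ?_
  by_contra hkN
  simp only [Finset.coe_range, Set.mem_Iio, not_lt] at hkN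
  exact hk (by simp [segBalance_eq_zero (show (syllables g).length ≤ 2 * k + 2 by omega)])

theorem Delta1_quasihom_general {M : Bool → Type*} [∀ b, Group (M b)]
    (a : M true) (g h : CoprodI M) :
    Delta1 a (g * h) ≤ Delta1 a g + Delta1 a h + 9 := by
  obtain ⟨bad, hbad, hadd⟩ := exists_segBalance_syllables_mul ⟨true, a⟩ g h
  set N := (syllables g).length + (syllables h).length + (syllables (g * h)).length
  rw [Delta1_eq_sum_range a (N := N) (by omega), Delta1_eq_sum_range a (N := N) (by omega),
    Delta1_eq_sum_range a (N := N) (by omega)]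
  exact (sum_ite_odd_le hadd).trans (by omega)

/-- `Δ₁` is a quasi-homomorphism: `Δ₁(gh) ≤ Δ₁(g) + Δ₁(h) + 9`. -/
theorem Delta1_quasihom {M : Bool → Type*} [∀ b, Group (M b)]
    [Nontrivial (M true)] [Nontrivial (M false)]
    (a : M true) (ha1 : a ≠ 1) (ha2 : a ≠ a⁻¹) (g h : CoprodI M) :
    Delta1 a (g * h) ≤ Delta1 a g + Delta1 a h + 9 :=
  Delta1_quasihom_general a g h
end

section
/- Let g ∈ G be a palindrome (or more generally an {a, a⁻¹}-palindrome) in the free product G = A * B, where a ∈ A has order at least 3. Then at most one value d_k(g) is odd and at most one value d*_k(g) is odd; consequently Δ₁(g) ≤ 2. -/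
open Monoid Monoid.CoprodI

attribute [local instance] Classical.propDecidable

/-- A reduced word is a `C`-palindrome if the occurrences of syllables from `C`
are placed symmetrically, with equal values at mirrored positions. -/
noncomputable def IsCPalindrome {ι : Type*} {M : ι → Type*} [∀ i, Group (M i)]
    (C : Set (Σ i, M i)) (g : CoprodI M) : Prop :=
  ∀ (n : ℕ), ∀ x ∈ C, (syllables g)[n]? = some x ↔ (syllables g).reverse[n]? = some x

lemma segCount_odd_subsingleton {ι : Type*} {M : ι → Type*} [∀ i, Group (M i)]
    (s : Σ i, M i) (g : CoprodI M)
    (hsym : ∀ n : ℕ, (syllables g)[n]? = some s ↔ (syllables g).reverse[n]? = some s) :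
    {k : ℕ | Odd (segCount s k g)}.Subsingleton := by
  set L := syllables g with hLdef
  set N := L.length with hNdef
  have hsym' : ∀ n, n < N → (L[n]? = some s ↔ L[N - 1 - n]? = some s) := by
    intro n hn
    rw [hsym n, List.getElem?_reverse hn]
  have key : ∀ k : ℕ, Odd (segCount s k g) → ∃ p q : ℕ,
      ((p, q) ∈ (Finset.range N ×ˢ Finset.range N).filter
        (fun pq => pq.1 < pq.2 ∧ L[pq.1]? = some s ∧ L[pq.2]? = some s ∧
          (∀ r ∈ Finset.Ioo pq.1 pq.2, L[r]? ≠ some s) ∧ pq.2 - pq.1 = 2*k+2))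
      ∧ p + q + 1 = N := by
    intro k hk
    by_contra hcon
    push_neg at hcon
    rw [segCount] at hk
    set T := (Finset.range N ×ˢ Finset.range N).filter
        (fun pq : ℕ × ℕ => pq.1 < pq.2 ∧ L[pq.1]? = some s ∧ L[pq.2]? = some s ∧
          (∀ r ∈ Finset.Ioo pq.1 pq.2, L[r]? ≠ some s) ∧ pq.2 - pq.1 = 2*k+2) with hT
    have unpack : ∀ pq : ℕ × ℕ, pq ∈ T → pq.1 < N ∧ pq.2 < N ∧ pq.1 < pq.2 ∧
        L[pq.1]? = some s ∧ L[pq.2]? = some s ∧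
        (∀ r ∈ Finset.Ioo pq.1 pq.2, L[r]? ≠ some s) ∧ pq.2 - pq.1 = 2*k+2 := by
      intro pq hpq
      rw [hT, Finset.mem_filter, Finset.mem_product, Finset.mem_range, Finset.mem_range] at hpq
      exact ⟨hpq.1.1, hpq.1.2, hpq.2⟩
    have g_mem : ∀ pq : ℕ × ℕ, pq ∈ T → ((N - 1 - pq.2, N - 1 - pq.1) : ℕ × ℕ) ∈ T := by
      rintro ⟨p, q⟩ hpq
      obtain ⟨hpN, hqN, hlt, hps, hqs, hbet, hgap⟩ := unpack _ hpq
      simp only at hpN hqN hlt hps hqs hbet hgap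
      rw [hT, Finset.mem_filter, Finset.mem_product, Finset.mem_range, Finset.mem_range]
      refine ⟨⟨by omega, by omega⟩, by omega, ?_, ?_, ?_, by omega⟩
      · have h1 : N - 1 - (N - 1 - q) = q := by omega
        have := (hsym' (N - 1 - q) (by omega))
        rw [h1] at this
        exact this.mpr hqs
      · have h1 : N - 1 - (N - 1 - p) = p := by omega
        have := (hsym' (N - 1 - p) (by omega))
        rw [h1] at this
        exact this.mpr hps
      · intro r hr hrs
        rw [Finset.mem_Ioo] at hr
        have hrN : r < N := by omega
        have := (hsym' r hrN).mp hrs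
        exact hbet (N - 1 - r) (Finset.mem_Ioo.mpr (by omega)) this
    have h0 : (∑ _x ∈ T, (1 : ZMod 2)) = 0 := by
      refine Finset.sum_involution (fun pq _ => (N - 1 - pq.2, N - 1 - pq.1)) ?_ ?_ g_mem ?_
      · intro a ha; decide
      · rintro ⟨p, q⟩ hpq _ heq
        obtain ⟨hpN, hqN, hlt, _, _, _, _⟩ := unpack _ hpq
        simp only [Prod.mk.injEq] at heq
        exact hcon p q hpq (by omega)
      · rintro ⟨p, q⟩ hpq
        obtain ⟨hpN, hqN, hlt, _, _, _, _⟩ := unpack _ hpq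
        simp only [Prod.mk.injEq]
        constructor <;> omega
    rw [Finset.sum_const, nsmul_eq_mul, mul_one] at h0
    have h2 : (2 : ℕ) ∣ T.card := (ZMod.natCast_eq_zero_iff _ _).mp h0
    rw [Nat.odd_iff] at hk
    omega
  intro k hk k' hk'
  obtain ⟨p, q, hmem, hc⟩ := key k hk
  obtain ⟨p', q', hmem', hc'⟩ := key k' hk'
  rw [Finset.mem_filter, Finset.mem_product, Finset.mem_range, Finset.mem_range] at hmem hmem'
  obtain ⟨⟨hpN, hqN⟩, hlt, hps, hqs, hbet, hgap⟩ := hmem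
  obtain ⟨⟨hpN', hqN'⟩, hlt', hps', hqs', hbet', hgap'⟩ := hmem'
  simp only at hpN hqN hlt hps hqs hbet hgap hpN' hqN' hlt' hps' hqs' hbet' hgap'
  rcases lt_trichotomy p p' with h | h | h
  · exact absurd hps' (hbet p' (Finset.mem_Ioo.mpr (by omega)) )
  · omega
  · exact absurd hps (hbet' p (Finset.mem_Ioo.mpr (by omega)))

/-- For an `{a, a⁻¹}`-palindrome (in particular for a palindrome) `g`, at most
one `d_k(g)` is odd, at most one `d*_k(g)` is odd, and `Δ₁(g) ≤ 2`. -/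
theorem Delta1_le_two_of_CPalindrome {M : Bool → Type*} [∀ b, Group (M b)]
    [Nontrivial (M true)] [Nontrivial (M false)]
    (a : M true) (ha1 : a ≠ 1) (ha2 : a ≠ a⁻¹) (g : CoprodI M)
    (hg : IsCPalindrome {⟨true, a⟩, ⟨true, a⁻¹⟩} g) :
    {k : ℕ | Odd (segCount ⟨true, a⟩ k g)}.Subsingleton ∧
    {k : ℕ | Odd (segCount ⟨true, a⁻¹⟩ k g)}.Subsingleton ∧
    Delta1 a g ≤ 2 := by
  have hS1 := segCount_odd_subsingleton ⟨true, a⟩ g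
    (fun n => hg n _ (Set.mem_insert _ _))
  have hS2 := segCount_odd_subsingleton ⟨true, a⁻¹⟩ g
    (fun n => hg n _ (Set.mem_insert_of_mem _ rfl))
  refine ⟨hS1, hS2, ?_⟩
  set f : ℕ → ℕ := fun k =>
    if Odd ((segCount ⟨true, a⟩ k g : ℤ) - segCount ⟨true, a⁻¹⟩ k g) then 1 else 0 with hf
  set k1 : ℕ := if h : ∃ k, Odd (segCount ⟨true, a⟩ k g) then h.choose else 0 with hk1
  set k2 : ℕ := if h : ∃ k, Odd (segCount ⟨true, a⁻¹⟩ k g) then h.choose else 0 with hk2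
  have hsupp : Function.support f ⊆ ↑({k1, k2} : Finset ℕ) := by
    intro k hk
    rw [Function.mem_support, hf] at hk
    have hodd : Odd ((segCount ⟨true, a⟩ k g : ℤ) - segCount ⟨true, a⁻¹⟩ k g) := by
      by_contra h; simp only [h, if_false] at hk; exact hk rfl
    have hor : Odd (segCount ⟨true, a⟩ k g) ∨ Odd (segCount ⟨true, a⁻¹⟩ k g) := by
      by_contra hc
      push_neg at hc
      rw [Nat.not_odd_iff_even, Nat.not_odd_iff_even] at hc
      have : Even ((segCount ⟨true, a⟩ k g : ℤ) - segCount ⟨true, a⁻¹⟩ k g) :=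
        Int.even_sub.mpr (by
          simp only [Int.even_coe_nat]
          exact iff_of_true hc.1 hc.2)
      exact (Int.not_odd_iff_even.mpr this) hodd
    simp only [Finset.coe_insert, Finset.coe_singleton, Set.mem_insert_iff,
      Set.mem_singleton_iff]
    rcases hor with h | h
    · left
      have hex : ∃ j, Odd (segCount ⟨true, a⟩ j g) := ⟨k, h⟩
      rw [hk1, dif_pos hex]
      exact hS1 h hex.choose_spec
    · right
      have hex : ∃ j, Odd (segCount ⟨true, a⁻¹⟩ j g) := ⟨k, h⟩
      rw [hk2, dif_pos hex]
      exact hS2 h hex.choose_spec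
  have heq : Delta1 a g = ∑ k ∈ ({k1, k2} : Finset ℕ), f k := by
    rw [Delta1]
    exact finsum_eq_sum_of_support_subset f hsupp
  rw [heq]
  calc ∑ k ∈ ({k1, k2} : Finset ℕ), f k ≤ ∑ _k ∈ ({k1, k2} : Finset ℕ), 1 :=
        Finset.sum_le_sum (fun j _ => by rw [hf]; dsimp only; split <;> omega)
    _ = ({k1, k2} : Finset ℕ).card := by rw [Finset.sum_const, smul_eq_mul, mul_one]
    _ ≤ 2 := by
        refine le_trans (Finset.card_insert_le _ _) ?_
        rw [Finset.card_singleton]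
end
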